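/- Let A be a Hopf algebra with counit ε, F an A-module algebra, and ν : F → k a linear functional satisfying ν(a·f) = ε(a)ν(f) for all a ∈ A, f ∈ F (an invariant integral). Suppose the bilinear form (f', f'') ↦ ν(f' f'') on F is non-degenerate. Then for A-module algebras F₁, F₂ = F, the integral operator K : F → F₁ given by K(f) = (id ⊗ ν)(𝒦(1 ⊗ f)) associated to a kernel 𝒦 ∈ F₁ ⊗ F is a morphism of A-modules if and only if 𝒦 is A-invariant (i.e. a·𝒦 = ε(a)𝒦 for all a ∈ A, where A acts on F₁ ⊗ F via the comultiplication). -/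

import Mathlib

open TensorProduct

/-- An `A`-module-algebra structure on an algebra `F`, for a Hopf algebra `A`
over `k`: a linear action `ρ` which is unital, multiplicative in `A`,
satisfies `a·1 = ε(a)1`, and `a·(fg) = Σ (a₁f)(a₂g)` (the sum over the
comultiplication being expressed via `TensorProduct.lift`). -/
structure ModuleAlgAct (k A F : Type*) [Field k] [Ring A] [HopfAlgebra k A]
    [Ring F] [Algebra k F] where
  ρ : A →ₗ[k] F →ₗ[k] F
  one_act : ρ 1 = LinearMap.id
  mul_act : ∀ a b : A, ρ (a * b) = ρ a ∘ₗ ρ b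
  act_one : ∀ a : A, ρ a 1 = Coalgebra.counit (R := k) a • (1 : F)
  act_mul : ∀ (a : A) (f g : F), ρ a (f * g) =
      TensorProduct.lift ((LinearMap.mul k F).compl₁₂ (ρ.flip f) (ρ.flip g))
        (Coalgebra.comul (R := k) a)

/-- The induced action of `A` on `F₁ ⊗ F₂`, via the comultiplication:
`a·(x⊗y) = Σ (a₁x)⊗(a₂y)`. -/
noncomputable def tensorAct (k A F₁ F₂ : Type*) [Field k] [Ring A]
    [HopfAlgebra k A] [Ring F₁] [Algebra k F₁] [Ring F₂] [Algebra k F₂]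
    (M₁ : ModuleAlgAct k A F₁) (M₂ : ModuleAlgAct k A F₂) :
    A →ₗ[k] (F₁ ⊗[k] F₂ →ₗ[k] F₁ ⊗[k] F₂) :=
  (TensorProduct.homTensorHomMap (RingHom.id k) F₁ F₂ F₁ F₂) ∘ₗ
    (TensorProduct.map M₁.ρ M₂.ρ) ∘ₗ Coalgebra.comul (R := k)

/-! Write `K_t f = Σ ν(y f) x` for `t = Σ x ⊗ y`. Non-degeneracy of `(f, g) ↦ ν(f g)` makes
`t ↦ K_t` injective. Invariance of `ν` and the module-algebra axiom give
`a · K_t f = Σ K_{a₁·t} (a₂ f)`, which, by the antipode, says that `t ↦ K_t` intertwines the action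
of `A` on `F₁ ⊗ F` with the conjugation action `(a·T) f = Σ a₁ T(S(a₂) f)` on `Hom(F, F₁)`.
An `A`-linear `T` is invariant under conjugation, and conversely the displayed identity turns
invariance of `𝒦` into `A`-linearity of `K_𝒦`. -/

open Coalgebra HopfAlgebra

section IntegralOperator

variable {k F₁ F₂ : Type*} [CommSemiring k] [AddCommMonoid F₁] [Module k F₁] [Semiring F₂]
  [Algebra k F₂]

noncomputable def integralOperator (ν : F₂ →ₗ[k] k) : F₁ ⊗[k] F₂ →ₗ[k] F₂ →ₗ[k] F₁ :=
  lift (LinearMap.smulRightₗ ∘ₗ (LinearMap.mul k F₂).compr₂ ν).flip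

@[simp] lemma integralOperator_tmul (ν : F₂ →ₗ[k] k) (x : F₁) (y f : F₂) :
    integralOperator ν (x ⊗ₜ y) f = ν (y * f) • x := by
  simp [integralOperator]

lemma apply_integralOperator (ν : F₂ →ₗ[k] k) (φ : Module.Dual k F₁) (t : F₁ ⊗[k] F₂) (f : F₂) :
    φ (integralOperator ν t f) = ν (TensorProduct.lid k F₂ (φ.rTensor F₂ t) * f) := by
  induction t using TensorProduct.induction_on with
  | zero => simp
  | tmul x y => simp [mul_comm]
  | add t₁ t₂ h₁ h₂ => simp [h₁, h₂, add_mul]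

lemma integralOperator_eq_comp_mulLeft {F₁ : Type*} [Semiring F₁] [Algebra k F₁]
    (ν : F₂ →ₗ[k] k) (t : F₁ ⊗[k] F₂) :
    integralOperator ν t = (TensorProduct.rid k F₁).toLinearMap ∘ₗ
      TensorProduct.map LinearMap.id ν ∘ₗ LinearMap.mulLeft k t ∘ₗ TensorProduct.mk k F₁ F₂ 1 := by
  ext f
  induction t using TensorProduct.induction_on with
  | zero => simp
  | tmul x y => simp [Algebra.TensorProduct.tmul_mul_tmul]
  | add t₁ t₂ h₁ h₂ => simp_all [add_mul]

lemma integralOperator_injective {k F₁ F₂ : Type*} [Field k] [AddCommGroup F₁] [Module k F₁]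
    [Ring F₂] [Algebra k F₂] (ν : F₂ →ₗ[k] k)
    (hnd : ∀ f : F₂, (∀ g : F₂, ν (f * g) = 0) → f = 0) :
    Function.Injective (integralOperator (F₁ := F₁) ν) := by
  classical
  rw [← LinearMap.ker_eq_bot, LinearMap.ker_eq_bot']
  intro t ht
  let b := Module.Basis.ofVectorSpace k F₁
  apply (equivFinsuppOfBasisLeft b).injective
  ext i
  rw [equivFinsuppOfBasisLeft_apply, map_zero, Finsupp.zero_apply]
  refine hnd _ fun f => ?_
  rw [← apply_integralOperator, ht]
  simp

end IntegralOperator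

section Coalgebra

variable {k A N : Type*} [CommSemiring k] [AddCommMonoid A] [Module k A] [Coalgebra k A]
  [AddCommMonoid N] [Module k N] {ι : Type*} {a : A}

lemma sum_smul_counit_eq (𝓡 : Repr k a ι) :
    ∑ i ∈ 𝓡.index, counit (R := k) (𝓡.right i) • 𝓡.left i = a := by
  simpa only [map_sum, TensorProduct.rid_tmul, one_smul] using
    congr(TensorProduct.rid k A $(sum_tmul_counit_eq 𝓡))

lemma sum_counit_smul_map (g : A →ₗ[k] N) (𝓡 : Repr k a ι) :
    ∑ i ∈ 𝓡.index, counit (R := k) (𝓡.left i) • g (𝓡.right i) = g a := by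
  conv_rhs => rw [← sum_counit_smul 𝓡]
  simp [map_sum]

end Coalgebra

section ConjAct

variable {k A M N : Type*} [CommSemiring k] [Semiring A] [HopfAlgebra k A]
  [AddCommMonoid M] [Module k M] [AddCommMonoid N] [Module k N]

noncomputable def conjAct (ρM : A →ₗ[k] M →ₗ[k] M) (ρN : A →ₗ[k] N →ₗ[k] N) (a : A)
    (X : M →ₗ[k] N) (m : M) : N :=
  ∑ i ∈ (ℛ k a).index, ρN ((ℛ k a).left i) (X (ρM (antipode k ((ℛ k a).right i)) m))

lemma conjAct_eq_of_act_apply_eq (ρM : A →ₗ[k] M →ₗ[k] M)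
    (hmul : ∀ a b, ρM (a * b) = ρM a ∘ₗ ρM b) (hone : ρM 1 = LinearMap.id)
    (ρN : A →ₗ[k] N →ₗ[k] N) (X : M →ₗ[k] N) (P : A →ₗ[k] M →ₗ[k] N)
    (h : ∀ a m, ρN a (X m) = ∑ i ∈ (ℛ k a).index, P ((ℛ k a).left i) (ρM ((ℛ k a).right i) m))
    (a : A) (m : M) : conjAct ρM ρN a X m = P a m := by
  let μ : A ⊗[k] A →ₗ[k] M := lift (ρM.compl₂ (ρM.flip m ∘ₗ antipode k))
  have coassoc := congr(lift (P.compl₂ μ) $(sum_tmul_tmul_eq (ℛ k a)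
    (fun i => ℛ k ((ℛ k a).left i)) (fun i => ℛ k ((ℛ k a).right i))))
  simp only [map_sum, lift.tmul, LinearMap.compl₂_apply, μ, LinearMap.comp_apply,
    LinearMap.flip_apply] at coassoc
  -- `Σ a₁·X(S(a₂) m) = Σ P(a₁₁)(a₁₂ S(a₂) m) = Σ P(a₁)(a₂₁ S(a₂₂) m) = Σ P(a₁)(ε(a₂) m)`
  calc conjAct ρM ρN a X m = _ := by simp only [conjAct, h]
    _ = _ := coassoc
    _ = ∑ i ∈ (ℛ k a).index, P ((ℛ k a).left i) (counit (R := k) ((ℛ k a).right i) • m) := by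
      refine Finset.sum_congr rfl fun i _ => ?_
      simp only [← LinearMap.comp_apply (ρM _), ← hmul, ← map_sum, ← LinearMap.sum_apply,
        sum_mul_antipode_eq_smul, map_smul, hone, LinearMap.smul_apply, LinearMap.id_apply]
    _ = P a m := by
      conv_rhs => rw [← sum_smul_counit_eq (ℛ k a)]
      simp only [map_sum, map_smul, LinearMap.sum_apply, LinearMap.smul_apply]

lemma conjAct_eq_counit_smul (ρM : A →ₗ[k] M →ₗ[k] M)
    (hmul : ∀ a b, ρM (a * b) = ρM a ∘ₗ ρM b) (hone : ρM 1 = LinearMap.id)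
    (ρN : A →ₗ[k] N →ₗ[k] N) (X : M →ₗ[k] N) (hX : ∀ a m, X (ρM a m) = ρN a (X m))
    (a : A) (m : M) : conjAct ρM ρN a X m = counit (R := k) a • X m :=
  conjAct_eq_of_act_apply_eq ρM hmul hone ρN X (counit.smulRight X)
    (fun a m => by simpa [← hX] using (sum_counit_smul_map (X ∘ₗ ρM.flip m) (ℛ k a)).symm) a m

end ConjAct

section ModuleAlgAct

variable {k A F₁ F₂ : Type*} [Field k] [Ring A] [HopfAlgebra k A]
    [Ring F₁] [Algebra k F₁] [Ring F₂] [Algebra k F₂]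
    (M₁ : ModuleAlgAct k A F₁) (M₂ : ModuleAlgAct k A F₂) {ν : F₂ →ₗ[k] k}

lemma ModuleAlgAct.act_mul_eq_sum {ι : Type*} {a : A} (𝓡 : Repr k a ι) (f g : F₂) :
    M₂.ρ a (f * g) = ∑ i ∈ 𝓡.index, M₂.ρ (𝓡.left i) f * M₂.ρ (𝓡.right i) g := by
  simp [M₂.act_mul, ← 𝓡.eq, map_sum]

lemma tensorAct_tmul {ι : Type*} {a : A} (𝓡 : Repr k a ι) (x : F₁) (y : F₂) :
    tensorAct k A F₁ F₂ M₁ M₂ a (x ⊗ₜ y) =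
      ∑ i ∈ 𝓡.index, M₁.ρ (𝓡.left i) x ⊗ₜ M₂.ρ (𝓡.right i) y := by
  simp [tensorAct, ← 𝓡.eq, map_sum]

lemma act_integralOperator
    (hinv : ∀ (a : A) (f : F₂), ν (M₂.ρ a f) = counit (R := k) a * ν f)
    (a : A) (t : F₁ ⊗[k] F₂) (f : F₂) :
    M₁.ρ a (integralOperator ν t f) = ∑ i ∈ (ℛ k a).index,
      integralOperator ν (tensorAct k A F₁ F₂ M₁ M₂ ((ℛ k a).left i) t)
        (M₂.ρ ((ℛ k a).right i) f) := by
  induction t using TensorProduct.induction_on with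
  | zero => simp
  | add t₁ t₂ h₁ h₂ => simp [h₁, h₂, Finset.sum_add_distrib]
  | tmul x y =>
    -- `a·(ν(y f) x) = Σ ν(a₂(y f)) a₁x = Σ ν(a₂₁y · a₂₂f) a₁x`, regrouped by coassociativity
    let ψ : A ⊗[k] A →ₗ[k] k :=
      ν ∘ₗ lift ((LinearMap.mul k F₂).compl₁₂ (M₂.ρ.flip y) (M₂.ρ.flip f))
    have coassoc := congr(TensorProduct.rid k F₁ (TensorProduct.map (M₁.ρ.flip x) ψ
      $(sum_tmul_tmul_eq (ℛ k a) (fun i => ℛ k ((ℛ k a).left i))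
        (fun i => ℛ k ((ℛ k a).right i)))))
    simp only [map_sum, TensorProduct.map_tmul, TensorProduct.rid_tmul, ψ, LinearMap.comp_apply,
      lift.tmul, LinearMap.compl₁₂_apply, LinearMap.mul_apply', LinearMap.flip_apply] at coassoc
    calc M₁.ρ a (integralOperator ν (x ⊗ₜ y) f)
        = ∑ i ∈ (ℛ k a).index, ν (M₂.ρ ((ℛ k a).right i) (y * f)) • M₁.ρ ((ℛ k a).left i) x := by
          conv_lhs => rw [← sum_smul_counit_eq (ℛ k a)]
          simp [map_sum, hinv, Finset.smul_sum, smul_smul, mul_comm]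
      _ = _ := by simp only [M₂.act_mul_eq_sum (ℛ k _), map_sum, Finset.sum_smul]
      _ = _ := coassoc.symm
      _ = _ := by simp [tensorAct_tmul M₁ M₂ (ℛ k _), map_sum]

lemma conjAct_integralOperator
    (hinv : ∀ (a : A) (f : F₂), ν (M₂.ρ a f) = counit (R := k) a * ν f)
    (a : A) (t : F₁ ⊗[k] F₂) (f : F₂) :
    conjAct M₂.ρ M₁.ρ a (integralOperator ν t) f =
      integralOperator ν (tensorAct k A F₁ F₂ M₁ M₂ a t) f :=
  conjAct_eq_of_act_apply_eq M₂.ρ M₂.mul_act M₂.one_act M₁.ρ _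
    (integralOperator ν ∘ₗ (tensorAct k A F₁ F₂ M₁ M₂).flip t)
    (fun a f => act_integralOperator M₁ M₂ hinv a t f) a f

end ModuleAlgAct

theorem stmt5_general {k A F₁ F₂ : Type*} [Field k] [Ring A] [HopfAlgebra k A]
    [Ring F₁] [Algebra k F₁] [Ring F₂] [Algebra k F₂]
    (M₁ : ModuleAlgAct k A F₁) (M₂ : ModuleAlgAct k A F₂)
    (ν : F₂ →ₗ[k] k)
    (hinv : ∀ (a : A) (f : F₂), ν (M₂.ρ a f) = Coalgebra.counit (R := k) a * ν f)
    (hnd : ∀ f : F₂, (∀ g : F₂, ν (f * g) = 0) → f = 0)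
    (𝒦 : F₁ ⊗[k] F₂) (K : F₂ →ₗ[k] F₁)
    (hK : K = (TensorProduct.rid k F₁).toLinearMap ∘ₗ
        TensorProduct.map LinearMap.id ν ∘ₗ LinearMap.mulLeft k 𝒦 ∘ₗ
        TensorProduct.mk k F₁ F₂ 1) :
    (∀ (a : A) (f : F₂), K (M₂.ρ a f) = M₁.ρ a (K f)) ↔
      (∀ a : A, tensorAct k A F₁ F₂ M₁ M₂ a 𝒦
          = Coalgebra.counit (R := k) a • 𝒦) := by
  rw [← integralOperator_eq_comp_mulLeft] at hK
  subst hK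
  constructor
  · intro hcomm a
    apply integralOperator_injective ν hnd
    ext f
    rw [← conjAct_integralOperator M₁ M₂ hinv,
      conjAct_eq_counit_smul M₂.ρ M₂.mul_act M₂.one_act M₁.ρ _ hcomm, map_smul,
      LinearMap.smul_apply]
  · intro hinvar a f
    simp only [act_integralOperator M₁ M₂ hinv, hinvar, map_smul, LinearMap.smul_apply]
    exact (sum_counit_smul_map (integralOperator ν 𝒦 ∘ₗ M₂.ρ.flip f) (ℛ k a)).symm

/-- Let `A` be a Hopf algebra, `F₁`, `F₂` be `A`-module algebras,
`ν : F₂ → k` an invariant integral with non-degenerate associated bilinear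
form `(f',f'') ↦ ν(f'f'')`. Then the integral operator
`K : f ↦ (id ⊗ ν)(𝒦(1 ⊗ f))` with kernel `𝒦 ∈ F₁ ⊗ F₂` is a morphism of
`A`-modules if and only if the kernel `𝒦` is `A`-invariant. -/
theorem stmt5 {k A F₁ F₂ : Type*} [Field k] [Ring A] [HopfAlgebra k A]
    [Ring F₁] [Algebra k F₁] [Ring F₂] [Algebra k F₂]
    (M₁ : ModuleAlgAct k A F₁) (M₂ : ModuleAlgAct k A F₂)
    (ν : F₂ →ₗ[k] k)
    (hinv : ∀ (a : A) (f : F₂), ν (M₂.ρ a f) = Coalgebra.counit (R := k) a * ν f)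
    (hnd : ∀ f : F₂, (∀ g : F₂, ν (f * g) = 0) → f = 0)
    (hnd' : ∀ f : F₂, (∀ g : F₂, ν (g * f) = 0) → f = 0)
    (𝒦 : F₁ ⊗[k] F₂) (K : F₂ →ₗ[k] F₁)
    (hK : K = (TensorProduct.rid k F₁).toLinearMap ∘ₗ
        TensorProduct.map LinearMap.id ν ∘ₗ LinearMap.mulLeft k 𝒦 ∘ₗ
        TensorProduct.mk k F₁ F₂ 1) :
    (∀ (a : A) (f : F₂), K (M₂.ρ a f) = M₁.ρ a (K f)) ↔
      (∀ a : A, tensorAct k A F₁ F₂ M₁ M₂ a 𝒦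
          = Coalgebra.counit (R := k) a • 𝒦) :=
  stmt5_general M₁ M₂ ν hinv hnd 𝒦 K hK
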